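/- arXiv:2505.04828 — 2 statements merged into one kernel-verified Lean document; each statement's English description precedes it below -/
import Mathlib

section
/- For a random N×N complex induced Ginibre matrix G with rectangularity index L ≥ 0, the joint probability P(r_min^{(N)}(G) ≥ r and r_max^{(N)}(G) ≤ R) factorizes as P(r_max^{(N)}(G) ≤ R) · ∏_{k=1}^N [1 − γ(k+L, r²)/γ(k+L, R²)], for 0 < r ≤ R. -/
/-!
Write `|Δ(z)|² = det V(z) · conj (det V(z))` for the Vandermonde matrix `V` and expand both
determinants over permutations. On a product of annuli `a ≤ |zⱼ| ≤ b` the weight factorises, so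
Fubini turns each term into a product of one-variable moments `∫ w^m conj(w)^n |w|^(2L) e^(-|w|²)`.
In polar coordinates these carry the angular factor `∫ e^(i(m-n)θ) dθ`, which vanishes for `m ≠ n`;
hence only the terms `σ = τ` survive and the integral is `N! ∏ₖ π (γ(k+L, b²) - γ(k+L, a²))`
(the radial integral becomes `γ` after `t = ρ²`). Taking `a = r` and `a = 0` (where `γ(k+L, 0) = 0`)
and dividing gives the factorisation.
-/

open MeasureTheory Real Filter Finset Topology Asymptotics

/-- Lower incomplete Gamma function `γ(a,x) = ∫_0^x t^(a-1) e^(-t) dt`. -/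
noncomputable def lGamma (a x : ℝ) : ℝ := ∫ t in Set.Ioc 0 x, t ^ (a - 1) * Real.exp (-t)

/-- Joint eigenvalue density of the `N × N` complex induced Ginibre ensemble with
rectangularity index `L`. -/
noncomputable def inducedGinibreDensity (N : ℕ) (L : ℝ) (z : Fin N → ℂ) : ℝ :=
  ((N.factorial : ℝ) * Real.pi ^ N * ∏ k ∈ Finset.Icc 1 N, Real.Gamma ((k : ℝ) + L))⁻¹ *
    (∏ p ∈ Finset.univ.filter (fun p : Fin N × Fin N => p.1 < p.2), ‖z p.1 - z p.2‖ ^ 2) *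
    (∏ j, ‖z j‖ ^ (2 * L)) * Real.exp (-∑ j, ‖z j‖ ^ 2)

open ComplexConjugate

theorem prod_Icc_one_eq_prod_fin {M : Type*} [CommMonoid M] (f : ℕ → M) (N : ℕ) :
    ∏ k ∈ Icc 1 N, f k = ∏ j : Fin N, f (j + 1) := by
  rw [Fin.prod_univ_eq_prod_range (fun j => f (j + 1)), range_eq_Ico, prod_Ico_add' f, zero_add,
    Ico_add_one_right_eq_Icc]

theorem Matrix.det_vandermonde_eq_sum_perm {R : Type*} [CommRing R] {n : ℕ} (v : Fin n → R) :
    (Matrix.vandermonde v).det =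
      ∑ σ : Equiv.Perm (Fin n), ((σ.sign : ℤ) : R) * ∏ i, v i ^ (σ i : ℕ) := by
  rw [← Matrix.det_transpose, Matrix.det_apply']
  simp [Matrix.vandermonde_apply]

theorem prod_norm_sub_sq_eq_normSq_det_vandermonde {n : ℕ} (z : Fin n → ℂ) :
    ∏ p ∈ univ.filter (fun p : Fin n × Fin n => p.1 < p.2), ‖z p.1 - z p.2‖ ^ 2 =
      Complex.normSq (Matrix.vandermonde z).det := by
  rw [Complex.normSq_eq_norm_sq, Matrix.det_vandermonde, norm_prod, ← prod_pow, prod_filter,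
    Fintype.prod_prod_type]
  refine prod_congr rfl fun i _ => ?_
  rw [norm_prod, ← prod_pow, ← prod_filter]
  exact prod_congr (by ext; simp) fun j _ => by rw [norm_sub_rev]

theorem normSq_det_vandermonde_eq_sum {n : ℕ} (z : Fin n → ℂ) :
    (Complex.normSq (Matrix.vandermonde z).det : ℂ) =
      ∑ σ : Equiv.Perm (Fin n), ∑ τ : Equiv.Perm (Fin n), ((σ.sign : ℤ) * (τ.sign : ℤ) : ℂ) *
        ∏ j, z j ^ (σ j : ℕ) * conj (z j) ^ (τ j : ℕ) := by
  rw [← Complex.mul_conj, Matrix.det_vandermonde_eq_sum_perm, map_sum, sum_mul_sum]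
  refine sum_congr rfl fun σ _ => sum_congr rfl fun τ _ => ?_
  simp only [map_mul, map_intCast, map_prod, map_pow, prod_mul_distrib]
  ring

theorem polarCoord_symm_pow_mul_conj_pow (ρ θ : ℝ) (m n : ℕ) :
    Complex.polarCoord.symm (ρ, θ) ^ m * conj (Complex.polarCoord.symm (ρ, θ)) ^ n =
      (ρ : ℂ) ^ (m + n) * Complex.exp (((m : ℂ) - n) * θ * Complex.I) := by
  have hpolar : Complex.polarCoord.symm (ρ, θ) = ρ * Complex.exp (θ * Complex.I) := by
    rw [Complex.polarCoord_symm_apply, Complex.exp_mul_I]; push_cast; ring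
  have hconj : conj (Complex.exp (θ * Complex.I)) = Complex.exp (-(θ * Complex.I)) := by
    rw [← Complex.exp_conj]; simp
  have hexp : Complex.exp (((m : ℂ) - n) * θ * Complex.I) =
      Complex.exp (θ * Complex.I) ^ m * Complex.exp (-(θ * Complex.I)) ^ n := by
    rw [← Complex.exp_nat_mul, ← Complex.exp_nat_mul, ← Complex.exp_add]; ring_nf
  rw [hpolar, map_mul, Complex.conj_ofReal, hconj, hexp]
  ring

section OrthogonalMoments

variable {μ : Measure ℂ} [SigmaFinite μ] {g : ℂ → ℂ}

/-- Andreief's identity for a weight whose moment matrix is diagonal. -/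
theorem integral_normSq_det_vandermonde_mul_prod_of_orthogonal
    (hint : ∀ m n : ℕ, Integrable (fun w => w ^ m * conj w ^ n * g w) μ)
    (horth : ∀ m n : ℕ, m ≠ n → ∫ w, w ^ m * conj w ^ n * g w ∂μ = 0) (N : ℕ) :
    ∫ z, (Complex.normSq (Matrix.vandermonde z).det : ℂ) * ∏ j, g (z j)
        ∂Measure.pi (fun _ : Fin N => μ) =
      N.factorial * ∏ j : Fin N, ∫ w, w ^ (j : ℕ) * conj w ^ (j : ℕ) * g w ∂μ := by
  set M : ℕ → ℕ → ℂ := fun m n => ∫ w, w ^ m * conj w ^ n * g w ∂μ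
  have hterm : ∀ σ τ : Equiv.Perm (Fin N),
      ∫ z, ∏ j, z j ^ (σ j : ℕ) * conj (z j) ^ (τ j : ℕ) * g (z j)
        ∂Measure.pi (fun _ : Fin N => μ) = ∏ j, M (σ j) (τ j) :=
    fun σ τ => integral_fintype_prod_eq_prod (fun j w => w ^ (σ j : ℕ) * conj w ^ (τ j : ℕ) * g w)
  have hoff : ∀ σ τ : Equiv.Perm (Fin N), σ ≠ τ → ∏ j, M (σ j) (τ j) = 0 := by
    intro σ τ hστ
    obtain ⟨j, hj⟩ : ∃ j, σ j ≠ τ j := by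
      by_contra! h
      exact hστ (Equiv.ext h)
    exact prod_eq_zero (mem_univ j) (horth _ _ (Fin.val_injective.ne hj))
  calc ∫ z, (Complex.normSq (Matrix.vandermonde z).det : ℂ) * ∏ j, g (z j)
          ∂Measure.pi (fun _ : Fin N => μ)
      = ∑ σ : Equiv.Perm (Fin N), ∑ τ : Equiv.Perm (Fin N),
          ((σ.sign : ℤ) * (τ.sign : ℤ) : ℂ) * ∏ j, M (σ j) (τ j) := by
        have hexpand : ∀ z : Fin N → ℂ,
            (Complex.normSq (Matrix.vandermonde z).det : ℂ) * ∏ j, g (z j) =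
              ∑ σ : Equiv.Perm (Fin N), ∑ τ : Equiv.Perm (Fin N),
                ((σ.sign : ℤ) * (τ.sign : ℤ) : ℂ) *
                ∏ j, z j ^ (σ j : ℕ) * conj (z j) ^ (τ j : ℕ) * g (z j) := by
          intro z
          simp only [normSq_det_vandermonde_eq_sum, sum_mul, mul_assoc, ← prod_mul_distrib]
        simp_rw [hexpand]
        rw [integral_finsetSum _ fun σ _ => integrable_finsetSum _ fun τ _ =>
          (Integrable.fintype_prod fun j => hint _ _).const_mul _]
        refine sum_congr rfl fun σ _ => ?_
        rw [integral_finsetSum _ fun τ _ => (Integrable.fintype_prod fun j => hint _ _).const_mul _]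
        exact sum_congr rfl fun τ _ => by rw [integral_const_mul, hterm]
    _ = ∑ σ : Equiv.Perm (Fin N), ∏ j : Fin N, M j j := by
        refine sum_congr rfl fun σ _ => ?_
        rw [sum_eq_single σ (fun τ _ hτ => by rw [hoff σ τ (Ne.symm hτ), mul_zero])
          (fun h => absurd (mem_univ σ) h), Equiv.prod_comp σ (fun j => M j j)]
        norm_cast
        simp [Int.units_mul_self]
    _ = N.factorial * ∏ j : Fin N, M j j := by simp [Fintype.card_perm]

end OrthogonalMoments

def closedAnnulus (a b : ℝ) : Set ℂ := norm ⁻¹' Set.Icc a b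

theorem isCompact_closedAnnulus (a b : ℝ) : IsCompact (closedAnnulus a b) :=
  (isCompact_closedBall (0 : ℂ) b).of_isClosed_subset (isClosed_Icc.preimage continuous_norm)
    fun _ hw => mem_closedBall_zero_iff.mpr hw.2

theorem measurableSet_closedAnnulus (a b : ℝ) : MeasurableSet (closedAnnulus a b) :=
  measurableSet_Icc.preimage measurable_norm

theorem Ioi_zero_inter_Icc_ae_eq_Ioc {a b : ℝ} (ha : 0 ≤ a) :
    (Set.Ioi 0 ∩ Set.Icc a b : Set ℝ) =ᵐ[volume] Set.Ioc a b := by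
  refine ae_eq_set.mpr ⟨measure_mono_null (t := {a}) ?_ (measure_singleton a),
    measure_mono_null (t := ∅) ?_ measure_empty⟩
  · rintro x ⟨⟨-, hax, hxb⟩, hx⟩
    by_contra hxa
    exact hx ⟨lt_of_le_of_ne hax (Ne.symm hxa), hxb⟩
  · rintro x ⟨hx, hx'⟩
    exact hx' ⟨ha.trans_lt hx.1, hx.1.le, hx.2⟩

theorem setIntegral_closedAnnulus_pow_mul_conj_pow_mul (f : ℝ → ℂ) {a b : ℝ} (ha : 0 ≤ a)
    (m n : ℕ) :
    ∫ w in closedAnnulus a b, w ^ m * conj w ^ n * f ‖w‖ =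
      (∫ ρ in Set.Ioc a b, (ρ : ℂ) ^ (m + n + 1) * f ρ) *
        ∫ θ in Set.Ioo (-π) π, Complex.exp (((m : ℂ) - n) * θ * Complex.I) := by
  have hpolar : ∀ p ∈ Set.Ioi (0 : ℝ) ×ˢ Set.Ioo (-π) π,
      p.1 • (closedAnnulus a b).indicator (fun w => w ^ m * conj w ^ n * f ‖w‖)
          (Complex.polarCoord.symm p) =
        (Set.Icc a b).indicator (fun ρ : ℝ => (ρ : ℂ) ^ (m + n + 1) * f ρ) p.1 *
          Complex.exp (((m : ℂ) - n) * p.2 * Complex.I) := by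
    rintro ⟨ρ, θ⟩ ⟨hρ, -⟩
    have hnorm : ‖Complex.polarCoord.symm (ρ, θ)‖ = ρ := by
      rw [Complex.norm_polarCoord_symm, abs_of_pos hρ]
    by_cases hmem : ρ ∈ Set.Icc a b
    · have hmem' : Complex.polarCoord.symm (ρ, θ) ∈ closedAnnulus a b := by
        rwa [closedAnnulus, Set.mem_preimage, hnorm]
      rw [Set.indicator_of_mem hmem', Set.indicator_of_mem hmem, polarCoord_symm_pow_mul_conj_pow,
        hnorm, Complex.real_smul]
      ring
    · have hmem' : Complex.polarCoord.symm (ρ, θ) ∉ closedAnnulus a b := by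
        rwa [closedAnnulus, Set.mem_preimage, hnorm]
      rw [Set.indicator_of_notMem hmem', Set.indicator_of_notMem hmem, smul_zero, zero_mul]
  rw [← integral_indicator (measurableSet_closedAnnulus a b),
    ← Complex.integral_comp_polarCoord_symm,
    polarCoord_target, setIntegral_congr_fun (measurableSet_Ioi.prod measurableSet_Ioo) hpolar,
    Measure.volume_eq_prod, setIntegral_prod_mul ((Set.Icc a b).indicator _)
      (fun θ : ℝ => Complex.exp (((m : ℂ) - n) * θ * Complex.I)),
    setIntegral_indicator measurableSet_Icc,
    setIntegral_congr_set (Ioi_zero_inter_Icc_ae_eq_Ioc ha)]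

theorem integral_Ioo_exp_sub_mul_I_eq_zero {m n : ℕ} (hmn : m ≠ n) :
    ∫ θ in Set.Ioo (-π) π, Complex.exp (((m : ℂ) - n) * θ * Complex.I) = 0 := by
  have hc : ((m : ℂ) - n) * Complex.I ≠ 0 :=
    mul_ne_zero (sub_ne_zero.mpr (by exact_mod_cast hmn)) Complex.I_ne_zero
  simp_rw [mul_right_comm _ _ Complex.I]
  rw [← integral_Ioc_eq_integral_Ioo, ← intervalIntegral.integral_of_le (by linarith [pi_pos]),
    integral_exp_mul_complex hc, sub_eq_zero.mpr, zero_div]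
  exact Complex.exp_eq_exp_iff_exists_int.mpr ⟨(m : ℤ) - n, by push_cast; ring⟩

theorem setIntegral_closedAnnulus_pow_mul_conj_pow_mul_eq_zero (f : ℝ → ℂ) {a b : ℝ}
    (ha : 0 ≤ a) {m n : ℕ} (hmn : m ≠ n) :
    ∫ w in closedAnnulus a b, w ^ m * conj w ^ n * f ‖w‖ = 0 := by
  rw [setIntegral_closedAnnulus_pow_mul_conj_pow_mul f ha, integral_Ioo_exp_sub_mul_I_eq_zero hmn,
    mul_zero]

theorem setIntegral_closedAnnulus_pow_mul_conj_pow_self_mul (f : ℝ → ℂ) {a b : ℝ} (ha : 0 ≤ a)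
    (m : ℕ) :
    ∫ w in closedAnnulus a b, w ^ m * conj w ^ m * f ‖w‖ =
      2 * π * ∫ ρ in Set.Ioc a b, (ρ : ℂ) ^ (2 * m + 1) * f ρ := by
  rw [setIntegral_closedAnnulus_pow_mul_conj_pow_mul f ha, mul_comm]
  simp [two_mul, pi_pos.le]

theorem integral_Ioc_mul_comp_sq {f : ℝ → ℝ} (hf : Continuous f) {a b : ℝ} (ha : 0 ≤ a)
    (hab : a ≤ b) :
    ∫ ρ in Set.Ioc a b, ρ * f (ρ ^ 2) = (∫ t in Set.Ioc (a ^ 2) (b ^ 2), f t) / 2 := by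
  have hsubst := intervalIntegral.integral_comp_mul_deriv (a := a) (b := b)
    (fun x _ => by simpa using hasDerivAt_pow 2 x)
    (by fun_prop : Continuous fun x : ℝ => 2 * x).continuousOn hf
  rw [← intervalIntegral.integral_of_le hab,
    ← intervalIntegral.integral_of_le (pow_le_pow_left₀ ha hab 2),
    ← hsubst, ← intervalIntegral.integral_div]
  congr 1 with ρ
  simp only [Function.comp_apply]
  ring

theorem continuous_rpow_sub_one_mul_exp_neg {c : ℝ} (hc : 0 ≤ c - 1) :
    Continuous fun t : ℝ => t ^ (c - 1) * exp (-t) :=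
  (continuous_rpow_const hc).mul (continuous_exp.comp continuous_neg)

theorem integrableOn_rpow_sub_one_mul_exp_neg_Ioc {c : ℝ} (hc : 0 < c) (u v : ℝ) (hu : 0 ≤ u) :
    IntegrableOn (fun t : ℝ => t ^ (c - 1) * exp (-t)) (Set.Ioc u v) := by
  exact ((GammaIntegral_convergent hc).mono_set fun t ht => hu.trans_lt ht.1).congr_fun
    (fun t _ => mul_comm _ _) measurableSet_Ioc

theorem lGamma_sub_lGamma {c : ℝ} (hc : 0 < c) {u v : ℝ} (hu : 0 ≤ u) (huv : u ≤ v) :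
    lGamma c v - lGamma c u = ∫ t in Set.Ioc u v, t ^ (c - 1) * exp (-t) := by
  rw [lGamma, lGamma, ← Set.Ioc_union_Ioc_eq_Ioc hu huv,
    setIntegral_union (Set.Ioc_disjoint_Ioc_of_le le_rfl) measurableSet_Ioc
      (integrableOn_rpow_sub_one_mul_exp_neg_Ioc hc _ _ le_rfl)
      (integrableOn_rpow_sub_one_mul_exp_neg_Ioc hc _ _ hu)]
  ring

theorem lGamma_zero (c : ℝ) : lGamma c 0 = 0 := by
  simp [lGamma]

theorem lGamma_pos {c x : ℝ} (hc : 0 < c) (hx : 0 < x) : 0 < lGamma c x := by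
  rw [lGamma, ← intervalIntegral.integral_of_le hx.le]
  exact intervalIntegral.intervalIntegral_pos_of_pos_on
    ((intervalIntegrable_iff_integrableOn_Ioc_of_le hx.le).mpr
      (integrableOn_rpow_sub_one_mul_exp_neg_Ioc hc 0 x le_rfl))
    (fun t ht => mul_pos (rpow_pos_of_pos ht.1 _) (exp_pos _)) hx

noncomputable def ginibreRadialWeight (L ρ : ℝ) : ℝ := ρ ^ (2 * L) * exp (-ρ ^ 2)

theorem continuous_ginibreRadialWeight {L : ℝ} (hL : 0 ≤ L) : Continuous (ginibreRadialWeight L) :=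
  ((continuous_rpow_const (by positivity)).mul (continuous_exp.comp (continuous_pow 2).neg))

theorem inducedGinibreDensity_eq (N : ℕ) (L : ℝ) (z : Fin N → ℂ) :
    inducedGinibreDensity N L z =
      ((N.factorial : ℝ) * π ^ N * ∏ k ∈ Icc 1 N, Gamma ((k : ℝ) + L))⁻¹ *
        (Complex.normSq (Matrix.vandermonde z).det * ∏ j, ginibreRadialWeight L ‖z j‖) := by
  rw [inducedGinibreDensity, prod_norm_sub_sq_eq_normSq_det_vandermonde, ← sum_neg_distrib, exp_sum,
    mul_assoc, mul_assoc, ← prod_mul_distrib]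
  rfl

theorem setIntegral_closedAnnulus_pow_mul_conj_pow_self_mul_ginibreRadialWeight {L : ℝ} (hL : 0 ≤ L)
    {a b : ℝ} (ha : 0 ≤ a) (hab : a ≤ b) (m : ℕ) :
    ∫ w in closedAnnulus a b, w ^ m * conj w ^ m * (ginibreRadialWeight L ‖w‖ : ℂ) =
      ((π * (lGamma (m + 1 + L) (b ^ 2) - lGamma (m + 1 + L) (a ^ 2)) : ℝ) : ℂ) := by
  have hpow : ∀ ρ ∈ Set.Ioc a b, (ρ : ℂ) ^ (2 * m + 1) * (ginibreRadialWeight L ρ : ℂ) =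
      ((ρ * ((ρ ^ 2) ^ ((m + 1 + L : ℝ) - 1) * exp (-ρ ^ 2)) : ℝ) : ℂ) := by
    intro ρ hρ
    have hρ0 : 0 < ρ := ha.trans_lt hρ.1
    rw [ginibreRadialWeight, ← rpow_natCast_mul hρ0.le,
      show ((2 : ℕ) : ℝ) * ((m + 1 + L : ℝ) - 1) = (2 * m : ℕ) + 2 * L by push_cast; ring,
      rpow_add hρ0, rpow_natCast]
    push_cast
    ring
  have hc : 0 ≤ (m + 1 + L : ℝ) - 1 := by linarith [m.cast_nonneg (α := ℝ)]
  rw [setIntegral_closedAnnulus_pow_mul_conj_pow_self_mul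
      (fun ρ => (ginibreRadialWeight L ρ : ℂ)) ha,
    setIntegral_congr_fun measurableSet_Ioc hpow, integral_complex_ofReal,
    integral_Ioc_mul_comp_sq (continuous_rpow_sub_one_mul_exp_neg hc) ha hab,
    ← lGamma_sub_lGamma (by linarith) (sq_nonneg a) (pow_le_pow_left₀ ha hab 2)]
  push_cast
  ring

theorem setIntegral_pi_closedAnnulus_normSq_det_vandermonde_mul_ginibreRadialWeight (N : ℕ)
    {L : ℝ} (hL : 0 ≤ L) {a b : ℝ} (ha : 0 ≤ a) (hab : a ≤ b) :
    ∫ z in Set.univ.pi (fun _ : Fin N => closedAnnulus a b),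
        Complex.normSq (Matrix.vandermonde z).det * ∏ j, ginibreRadialWeight L ‖z j‖ =
      N.factorial * ∏ k ∈ Icc 1 N, π * (lGamma (k + L) (b ^ 2) - lGamma (k + L) (a ^ 2)) := by
  have hint : ∀ m n : ℕ, Integrable (fun w => w ^ m * conj w ^ n * (ginibreRadialWeight L ‖w‖ : ℂ))
      (volume.restrict (closedAnnulus a b)) := fun m n =>
    ContinuousOn.integrableOn_compact (isCompact_closedAnnulus a b) (by
      have := continuous_ginibreRadialWeight hL
      fun_prop)
  apply Complex.ofReal_injective
  rw [← integral_complex_ofReal]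
  push_cast
  rw [volume_pi, Measure.restrict_pi_pi,
    integral_normSq_det_vandermonde_mul_prod_of_orthogonal hint
      (fun m n hmn => setIntegral_closedAnnulus_pow_mul_conj_pow_mul_eq_zero
        (fun ρ => (ginibreRadialWeight L ρ : ℂ)) ha hmn) N]
  simp_rw [setIntegral_closedAnnulus_pow_mul_conj_pow_self_mul_ginibreRadialWeight hL ha hab]
  rw [prod_Icc_one_eq_prod_fin]
  push_cast
  rfl

/-- For the complex induced Ginibre ensemble with rectangularity index `L ≥ 0` and
`0 < r ≤ R`, the joint probability `P(r_min ≥ r and r_max ≤ R)` factorizes as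
`P(r_max ≤ R) · ∏_{k=1}^N [1 - γ(k+L, r²)/γ(k+L, R²)]`. -/
theorem induced_ginibre_joint_factorization (N : ℕ) (L : ℝ) (hL : 0 ≤ L)
    (r R : ℝ) (hr : 0 < r) (hrR : r ≤ R) :
    (∫ z in {z : Fin N → ℂ | ∀ j, r ≤ ‖z j‖ ∧ ‖z j‖ ≤ R}, inducedGinibreDensity N L z) =
      (∫ z in {z : Fin N → ℂ | ∀ j, ‖z j‖ ≤ R}, inducedGinibreDensity N L z) *
        ∏ k ∈ Finset.Icc 1 N,
          (1 - lGamma ((k : ℝ) + L) (r ^ 2) / lGamma ((k : ℝ) + L) (R ^ 2)) := by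
  have hR : 0 < R := hr.trans_le hrR
  have hannulus : {z : Fin N → ℂ | ∀ j, r ≤ ‖z j‖ ∧ ‖z j‖ ≤ R} =
      Set.univ.pi fun _ => closedAnnulus r R := by
    ext z; simp [closedAnnulus]
  have hball : {z : Fin N → ℂ | ∀ j, ‖z j‖ ≤ R} = Set.univ.pi fun _ => closedAnnulus 0 R := by
    ext z; simp [closedAnnulus]
  have hfactor : ∀ k ∈ Icc 1 N, π * (lGamma (k + L) (R ^ 2) - lGamma (k + L) (r ^ 2)) =
      π * (lGamma (k + L) (R ^ 2) - lGamma (k + L) (0 ^ 2)) *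
        (1 - lGamma (k + L) (r ^ 2) / lGamma (k + L) (R ^ 2)) := by
    intro k hk
    have hk1 : (1 : ℝ) ≤ k := by exact_mod_cast (mem_Icc.mp hk).1
    have hpos := lGamma_pos (c := k + L) (by linarith) (pow_pos hR 2)
    rw [zero_pow two_ne_zero, lGamma_zero, sub_zero, one_sub_div hpos.ne']
    field_simp
  simp_rw [inducedGinibreDensity_eq]
  rw [integral_const_mul, integral_const_mul, hannulus, hball,
    setIntegral_pi_closedAnnulus_normSq_det_vandermonde_mul_ginibreRadialWeight N hL hr.le hrR,
    setIntegral_pi_closedAnnulus_normSq_det_vandermonde_mul_ginibreRadialWeight N hL le_rfl hR.le,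
    prod_congr rfl hfactor, prod_mul_distrib]
  ring
end

section
/- For the complex Ginibre ensemble, the left tail of the minimum modulus distribution is asymptotically Rayleigh with parameter 1/√2: as r → 0, lim_{N→∞} P(r_min^{(N)}(A) < r) = 1 − e^{−r²}(1 − O(r⁴)); equivalently, lim_{N→∞} ∏_{k=0}^{N−1} Γ(k+1, r²)/Γ(k+1) = e^{−r²}(1 + O(r⁴)) as r → 0. -/
open MeasureTheory Real Filter Finset Topology Asymptotics

/-- Upper incomplete Gamma function `Γ(a,x) = ∫_x^∞ t^(a-1) e^(-t) dt`. -/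
noncomputable def uGamma (a x : ℝ) : ℝ := ∫ t in Set.Ioi x, t ^ (a - 1) * Real.exp (-t)

/-!
The `k = 0` factor of the product is `Q(1, x) = e^{-x}`. Every other factor is a regularized
incomplete Gamma value `Q(k+1, x) ∈ [0, 1]` with defect `1 - Q(k+1, x) ≤ x^{k+1}/(k+1)!`, and
these defects for `k ≥ 1` sum to at most `x²` when `x ≤ 1`. By `∏ (1 - aₖ) ≥ 1 - ∑ aₖ` the
product of those factors lies in `[1 - x², 1]`, uniformly in `N`; the products decrease in `N`,
so they converge, and with `x = r²` the limit is `e^{-r²}(1 + O(r⁴))`.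
-/

section IncompleteGamma

variable {a x : ℝ}

lemma uGamma_nonneg (hx : 0 ≤ x) : 0 ≤ uGamma a x :=
  setIntegral_nonneg measurableSet_Ioi fun t ht ↦
    have : 0 < t := hx.trans_lt ht
    by positivity

lemma integrableOn_rpow_mul_exp_neg_Ioi (ha : 0 < a) :
    IntegrableOn (fun t : ℝ ↦ t ^ (a - 1) * exp (-t)) (Set.Ioi 0) := by
  simpa only [mul_comm] using Real.GammaIntegral_convergent ha

lemma Gamma_eq_integral_Ioc_add_uGamma (ha : 0 < a) (hx : 0 ≤ x) :
    Gamma a = (∫ t in Set.Ioc 0 x, t ^ (a - 1) * exp (-t)) + uGamma a x := by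
  have hint := integrableOn_rpow_mul_exp_neg_Ioi ha
  rw [Real.Gamma_eq_integral ha, uGamma, ← setIntegral_union (Set.Ioc_disjoint_Ioi le_rfl)
      measurableSet_Ioi (hint.mono_set Set.Ioc_subset_Ioi_self)
      (hint.mono_set (Set.Ioi_subset_Ioi hx)), Set.Ioc_union_Ioi_eq_Ioi hx]
  simp only [mul_comm]

lemma integral_Ioc_rpow_mul_exp_neg_le (ha : 0 < a) (hx : 0 ≤ x) :
    ∫ t in Set.Ioc 0 x, t ^ (a - 1) * exp (-t) ≤ x ^ a / a := by
  have hpow : IntegrableOn (fun t : ℝ ↦ t ^ (a - 1)) (Set.Ioc 0 x) :=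
    (intervalIntegrable_iff_integrableOn_Ioc_of_le hx).1
      (intervalIntegral.intervalIntegrable_rpow' (by linarith))
  calc ∫ t in Set.Ioc 0 x, t ^ (a - 1) * exp (-t)
      ≤ ∫ t in Set.Ioc 0 x, t ^ (a - 1) := by
        refine setIntegral_mono_on
          ((integrableOn_rpow_mul_exp_neg_Ioi ha).mono_set Set.Ioc_subset_Ioi_self) hpow
          measurableSet_Ioc fun t ht ↦ ?_
        have : 0 < t := ht.1
        exact mul_le_of_le_one_right (by positivity) (exp_le_one_iff.2 (by linarith))
    _ = x ^ a / a := by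
        rw [← intervalIntegral.integral_of_le hx, integral_rpow (Or.inl (by linarith)),
          sub_add_cancel, zero_rpow ha.ne', sub_zero]

lemma uGamma_one (x : ℝ) : uGamma 1 x = exp (-x) := by
  simp only [uGamma, sub_self, rpow_zero, one_mul, integral_exp_neg_Ioi]

end IncompleteGamma

noncomputable def uGammaReg (a x : ℝ) : ℝ := uGamma a x / Gamma a

section Regularized

variable {a x : ℝ}

lemma uGammaReg_nonneg (ha : 0 < a) (hx : 0 ≤ x) : 0 ≤ uGammaReg a x :=
  div_nonneg (uGamma_nonneg hx) (Gamma_pos_of_pos ha).le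

lemma uGammaReg_le_one (ha : 0 < a) (hx : 0 ≤ x) : uGammaReg a x ≤ 1 := by
  have hsplit := Gamma_eq_integral_Ioc_add_uGamma ha hx
  have hlower : 0 ≤ ∫ t in Set.Ioc 0 x, t ^ (a - 1) * exp (-t) :=
    setIntegral_nonneg measurableSet_Ioc fun t ht ↦
      have : 0 < t := ht.1
      by positivity
  rw [uGammaReg, div_le_one (Gamma_pos_of_pos ha)]
  linarith

lemma one_sub_uGammaReg_le (ha : 0 < a) (hx : 0 ≤ x) :
    1 - uGammaReg a x ≤ x ^ a / Gamma (a + 1) := by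
  have hΓ := Gamma_pos_of_pos ha
  have hsplit := Gamma_eq_integral_Ioc_add_uGamma ha hx
  calc 1 - uGammaReg a x = (∫ t in Set.Ioc 0 x, t ^ (a - 1) * exp (-t)) / Gamma a := by
        rw [uGammaReg, one_sub_div hΓ.ne']
        congr 1
        linarith
    _ ≤ x ^ a / a / Gamma a := by gcongr; exact integral_Ioc_rpow_mul_exp_neg_le ha hx
    _ = x ^ a / Gamma (a + 1) := by rw [Gamma_add_one ha.ne', div_div]

lemma uGammaReg_one (x : ℝ) : uGammaReg 1 x = exp (-x) := by
  rw [uGammaReg, uGamma_one, Gamma_one, div_one]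

lemma one_sub_uGammaReg_natCast_le (n : ℕ) (hx : 0 ≤ x) :
    1 - uGammaReg ((n : ℝ) + 1) x ≤ x ^ (n + 1) / (n + 1).factorial := by
  have h := one_sub_uGammaReg_le (a := ((n + 1 : ℕ) : ℝ)) (by positivity) hx
  rwa [rpow_natCast, Gamma_nat_eq_factorial, Nat.cast_add_one] at h

end Regularized

lemma one_sub_sum_le_prod_one_sub {ι R : Type*} [CommRing R] [LinearOrder R]
    [IsStrictOrderedRing R] (s : Finset ι) (f : ι → R) (h0 : ∀ i ∈ s, 0 ≤ f i)
    (h1 : ∀ i ∈ s, f i ≤ 1) :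
    1 - ∑ i ∈ s, f i ≤ ∏ i ∈ s, (1 - f i) := by
  induction s using Finset.cons_induction with
  | empty => simp
  | cons a s _ ih =>
    rw [prod_cons, sum_cons]
    have hfa0 := h0 a (mem_cons_self a s)
    have hfa1 := h1 a (mem_cons_self a s)
    have ih := ih (fun i hi ↦ h0 i (mem_cons_of_mem hi)) (fun i hi ↦ h1 i (mem_cons_of_mem hi))
    have hsum : 0 ≤ ∑ i ∈ s, f i := sum_nonneg fun i hi ↦ h0 i (mem_cons_of_mem hi)
    nlinarith [mul_le_mul_of_nonneg_left ih (sub_nonneg.2 hfa1)]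

/-- `gapProb N (r ^ 2)` is the probability that an `N × N` complex Ginibre matrix has no
eigenvalue in the disk of radius `r`. -/
noncomputable def gapProb (N : ℕ) (x : ℝ) : ℝ := ∏ k ∈ range N, uGammaReg ((k : ℝ) + 1) x

section GapProbability

variable {x : ℝ}

lemma gapProb_nonneg (N : ℕ) (hx : 0 ≤ x) : 0 ≤ gapProb N x :=
  prod_nonneg fun k _ ↦ uGammaReg_nonneg (by positivity) hx

lemma gapProb_antitone (hx : 0 ≤ x) : Antitone (gapProb · x) :=
  antitone_nat_of_succ_le fun N ↦ by
    rw [gapProb, prod_range_succ]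
    exact mul_le_of_le_one_right (gapProb_nonneg N hx) (uGammaReg_le_one (by positivity) hx)

lemma tendsto_gapProb (hx : 0 ≤ x) :
    Tendsto (gapProb · x) atTop (𝓝 (⨅ N, gapProb N x)) :=
  tendsto_atTop_ciInf (gapProb_antitone hx) ⟨0, by rintro _ ⟨N, rfl⟩; exact gapProb_nonneg N hx⟩

lemma gapProb_succ (N : ℕ) (x : ℝ) :
    gapProb (N + 1) x = exp (-x) * ∏ k ∈ range N, uGammaReg (((k + 1 : ℕ) : ℝ) + 1) x := by
  rw [gapProb, prod_range_succ', Nat.cast_zero, zero_add, uGammaReg_one, mul_comm]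

lemma gapProb_succ_le_exp (N : ℕ) (hx : 0 ≤ x) : gapProb (N + 1) x ≤ exp (-x) := by
  rw [gapProb_succ]
  exact mul_le_of_le_one_right (exp_pos _).le
    (prod_le_one (fun k _ ↦ uGammaReg_nonneg (by positivity) hx)
      fun k _ ↦ uGammaReg_le_one (by positivity) hx)

lemma sum_one_sub_uGammaReg_le (N : ℕ) (hx₀ : 0 ≤ x) (hx₁ : x ≤ 1) :
    ∑ k ∈ range N, (1 - uGammaReg (((k + 1 : ℕ) : ℝ) + 1) x) ≤ x ^ 2 := by
  have hterm (k : ℕ) : 1 - uGammaReg (((k + 1 : ℕ) : ℝ) + 1) x ≤ x ^ 2 / 2 * (1 / 2) ^ k := by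
    have hfact : (2 : ℝ) ^ (k + 1) ≤ (k + 2).factorial := by
      have h := Nat.factorial_mul_pow_le_factorial (m := 1) (n := k + 1)
      rw [Nat.factorial_one, one_mul, add_comm 1 (k + 1)] at h
      exact_mod_cast h
    calc 1 - uGammaReg (((k + 1 : ℕ) : ℝ) + 1) x ≤ x ^ (k + 2) / (k + 2).factorial :=
          one_sub_uGammaReg_natCast_le (k + 1) hx₀
      _ ≤ x ^ 2 / 2 ^ (k + 1) :=
          div_le_div₀ (by positivity) (pow_le_pow_of_le_one hx₀ hx₁ (by omega)) (by positivity)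
            hfact
      _ = x ^ 2 / 2 * (1 / 2) ^ k := by rw [one_div_pow, pow_succ]; ring
  calc ∑ k ∈ range N, (1 - uGammaReg (((k + 1 : ℕ) : ℝ) + 1) x)
      ≤ ∑ k ∈ range N, x ^ 2 / 2 * (1 / 2) ^ k := sum_le_sum fun k _ ↦ hterm k
    _ = x ^ 2 / 2 * ∑ k ∈ range N, (1 / 2 : ℝ) ^ k := (mul_sum ..).symm
    _ ≤ x ^ 2 / 2 * 2 := by gcongr; exact sum_geometric_two_le N
    _ = x ^ 2 := by ring

lemma exp_mul_one_sub_sq_le_gapProb_succ (N : ℕ) (hx₀ : 0 ≤ x) (hx₁ : x ≤ 1) :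
    exp (-x) * (1 - x ^ 2) ≤ gapProb (N + 1) x := by
  rw [gapProb_succ]
  gcongr
  calc 1 - x ^ 2 ≤ 1 - ∑ k ∈ range N, (1 - uGammaReg (((k + 1 : ℕ) : ℝ) + 1) x) := by
        linarith [sum_one_sub_uGammaReg_le N hx₀ hx₁]
    _ ≤ ∏ k ∈ range N, (1 - (1 - uGammaReg (((k + 1 : ℕ) : ℝ) + 1) x)) :=
        one_sub_sum_le_prod_one_sub _ _
          (fun k _ ↦ sub_nonneg.2 (uGammaReg_le_one (by positivity) hx₀))
          fun k _ ↦ sub_le_self _ (uGammaReg_nonneg (by positivity) hx₀)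
    _ = ∏ k ∈ range N, uGammaReg (((k + 1 : ℕ) : ℝ) + 1) x := by simp only [sub_sub_cancel]

lemma abs_iInf_gapProb_sub_exp_le (hx₀ : 0 ≤ x) (hx₁ : x ≤ 1) :
    |(⨅ N, gapProb N x) - exp (-x)| ≤ x ^ 2 := by
  have hlim := (tendsto_add_atTop_iff_nat 1).2 (tendsto_gapProb hx₀)
  have hupper := le_of_tendsto' hlim fun N ↦ gapProb_succ_le_exp N hx₀
  have hlower := ge_of_tendsto' hlim fun N ↦ exp_mul_one_sub_sq_le_gapProb_succ N hx₀ hx₁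
  have hexp : exp (-x) ≤ 1 := exp_le_one_iff.2 (by linarith)
  rw [abs_le]
  constructor <;> nlinarith [exp_pos (-x), sq_nonneg x]

end GapProbability

/-- For the complex Ginibre ensemble, the left tail of the minimum-modulus distribution is
asymptotically Rayleigh(1/√2): with `F(r) = lim_{N} ∏_{k=0}^{N-1} Γ(k+1,r²)/Γ(k+1)` the
limiting survival probability of `r_min`, one has `F(r) = e^{-r²}(1 + O(r⁴))` as `r → 0⁺`,
equivalently `lim_N P(r_min < r) = 1 - F(r) = 1 - e^{-r²}(1 - O(r⁴))`. -/
theorem ginibre_min_modulus_left_tail_rayleigh :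
    ∃ F : ℝ → ℝ,
      (∀ r : ℝ, 0 < r →
        Filter.Tendsto
          (fun N : ℕ => ∏ k ∈ Finset.range N, uGamma ((k : ℝ) + 1) (r ^ 2) /
            Real.Gamma ((k : ℝ) + 1)) Filter.atTop (nhds (F r))) ∧
      (fun r : ℝ => F r - Real.exp (-r ^ 2)) =O[𝓝[>] (0 : ℝ)] (fun r : ℝ => r ^ 4) ∧
      (fun r : ℝ => (1 - F r) - (1 - Real.exp (-r ^ 2)))
        =O[𝓝[>] (0 : ℝ)] (fun r : ℝ => r ^ 4) := by
  have hbound : (fun r : ℝ ↦ (⨅ N, gapProb N (r ^ 2)) - exp (-r ^ 2)) =O[𝓝[>] 0] (· ^ 4) := by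
    refine .of_bound' ?_
    filter_upwards [Ioc_mem_nhdsGT (zero_lt_one' ℝ)] with r ⟨hr₀, hr₁⟩
    rw [norm_eq_abs, norm_of_nonneg (by positivity), show r ^ 4 = (r ^ 2) ^ 2 by ring]
    exact abs_iInf_gapProb_sub_exp_le (by positivity) (pow_le_one₀ hr₀.le hr₁)
  refine ⟨fun r ↦ ⨅ N, gapProb N (r ^ 2), fun r _ ↦ tendsto_gapProb (sq_nonneg r), hbound, ?_⟩
  exact hbound.neg_left.congr_left fun r ↦ by ring
end
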